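/- arXiv:1212.5785 — 2 statements merged into one kernel-verified Lean document; each statement's English description precedes it below -/
import Mathlib

section
/- Let ω₁,…,ω_n be roots of unity in ℂ whose average z = (1/n)∑ ω_k is a nonzero algebraic integer. Then all ω_k are equal and z is a root of unity. -/
/-!
Let `K` be the number field generated by the `ω k`. Every complex embedding `φ` of `K` sends
`z` to an average of roots of unity, so `‖φ z‖ ≤ 1`; by Kronecker's theorem the nonzero algebraic
integer `z` is then a root of unity. In particular `‖z‖ = 1`, and since the closed unit disk is
strictly convex, an average of points of the disk lies on the unit circle only when all the
points coincide.
-/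

open NumberField

lemma IsOfFinOrder.isIntegral {R A : Type*} [CommRing R] [Ring A] [Algebra R A] {x : A}
    (hx : IsOfFinOrder x) : IsIntegral R x := by
  obtain ⟨d, hd, hxd⟩ := isOfFinOrder_iff_pow_eq_one.1 hx
  exact .of_pow hd (hxd ▸ isIntegral_one)

lemma IntermediateField.numberField_adjoin_range {L ι : Type*} [Field L] [CharZero L] [Finite ι]
    {x : ι → L} (hx : ∀ i, IsIntegral ℚ (x i)) : NumberField (adjoin ℚ (Set.range x)) where
  to_finiteDimensional := finiteDimensional_adjoin (by rintro _ ⟨i, rfl⟩; exact hx i)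

lemma norm_sum_div_le_one {n : ℕ} {w : Fin n → ℂ} (hw : ∀ k, ‖w k‖ ≤ 1) :
    ‖(∑ k, w k) / n‖ ≤ 1 := by
  rw [norm_div, Complex.norm_natCast]
  refine div_le_one_of_le₀ ?_ n.cast_nonneg
  calc ‖∑ k, w k‖ ≤ ∑ k, ‖w k‖ := norm_sum_le _ _
    _ ≤ ∑ _k : Fin n, 1 := Finset.sum_le_sum fun k _ => hw k
    _ = n := by simp

lemma eq_of_norm_sum_div_eq_one {n : ℕ} {w : Fin n → ℂ} (hw : ∀ k, ‖w k‖ ≤ 1)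
    (h : ‖(∑ k, w k) / n‖ = 1) (k l : Fin n) : w k = w l := by
  by_contra hkl
  have hn : (0 : ℝ) < n := by exact_mod_cast k.pos
  have hmean : (∑ k, w k) / n = ∑ k, (n : ℝ)⁻¹ • w k := by
    simp only [Complex.real_smul, ← Finset.mul_sum, Complex.ofReal_inv, Complex.ofReal_natCast,
      div_eq_inv_mul]
  refine (norm_sum_lt_of_strictConvexSpace (fun _ _ => inv_nonneg.2 hn.le) ?_ (Finset.mem_univ k)
    (Finset.mem_univ l) hkl (inv_ne_zero hn.ne') (inv_ne_zero hn.ne') fun k _ => hw k).ne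
    (hmean ▸ h)
  simp [hn.ne']

lemma NumberField.isOfFinOrder_sum_div {K : Type*} [Field K] [NumberField K] {n : ℕ}
    {ω : Fin n → K} (hω : ∀ k, IsOfFinOrder (ω k)) (hz0 : (∑ k, ω k) / n ≠ 0)
    (hint : IsIntegral ℤ ((∑ k, ω k) / n)) : IsOfFinOrder ((∑ k, ω k) / n) := by
  obtain ⟨d, hd, hzd⟩ := Embeddings.pow_eq_one_of_norm_le_one K ℂ hz0 hint fun φ => by
    rw [map_div₀, map_sum, map_natCast]
    exact norm_sum_div_le_one fun k => ((φ : K →* ℂ).isOfFinOrder (hω k)).norm_eq_one.le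
  exact isOfFinOrder_iff_pow_eq_one.2 ⟨d, hd, hzd⟩

theorem stmt_2_general (n : ℕ) (ω : Fin n → ℂ)
    (hroot : ∀ k, ∃ d : ℕ, 0 < d ∧ ω k ^ d = 1)
    (z : ℂ) (hz : z = (∑ k, ω k) / n)
    (hz0 : z ≠ 0) (hint : IsIntegral ℤ z) :
    (∀ k l, ω k = ω l) ∧ ∃ d : ℕ, 0 < d ∧ z ^ d = 1 := by
  have hω k : IsOfFinOrder (ω k) := isOfFinOrder_iff_pow_eq_one.2 (hroot k)
  let K := IntermediateField.adjoin ℚ (Set.range ω)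
  have : NumberField K := IntermediateField.numberField_adjoin_range fun k => (hω k).isIntegral
  let ωK (k : Fin n) : K := ⟨ω k, IntermediateField.subset_adjoin ℚ _ ⟨k, rfl⟩⟩
  have hinj : Function.Injective (algebraMap K ℂ) := (algebraMap K ℂ).injective
  have hzK : algebraMap K ℂ ((∑ k, ωK k) / n) = z := by simp [hz, ωK]
  have hz_fin : IsOfFinOrder z := by
    rw [← hzK]
    refine (algebraMap K ℂ : K →* ℂ).isOfFinOrder (isOfFinOrder_sum_div
      (fun k => (hinj.isOfFinOrder_iff (f := (algebraMap K ℂ : K →* ℂ))).1 (hω k)) ?_ ?_)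
    · exact fun h => hz0 (by rw [← hzK, h, map_zero])
    · exact (isIntegral_algebraMap_iff hinj).1 (hzK ▸ hint)
  exact ⟨eq_of_norm_sum_div_eq_one (fun k => (hω k).norm_eq_one.le) (hz ▸ hz_fin.norm_eq_one),
    isOfFinOrder_iff_pow_eq_one.1 hz_fin⟩

theorem stmt_2 (n : ℕ) (hn : 0 < n) (ω : Fin n → ℂ)
    (hroot : ∀ k, ∃ d : ℕ, 0 < d ∧ ω k ^ d = 1)
    (z : ℂ) (hz : z = (∑ k, ω k) / n)
    (hz0 : z ≠ 0) (hint : IsIntegral ℤ z) :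
    (∀ k l, ω k = ω l) ∧ ∃ d : ℕ, 0 < d ∧ z ^ d = 1 :=
  stmt_2_general n ω hroot z hz hz0 hint
end

section
/- Let G be a finite group, χ a faithful complex character of G (i.e. its representation has trivial kernel), and let t be the number of distinct values in the set {χ(g) : g ∈ G}. Then every irreducible character of G occurs as a constituent of χ^l for some 0 ≤ l ≤ t−1 (Burnside–Brauer theorem). -/
/-!
Let `ψ` be the character of `W`. If `ψ` were orthogonal to `χ^l` for every `l < t`, it would be
orthogonal to `p ∘ χ` for every polynomial `p` of degree `< t`; take `p = ∏ (X - α)` over the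
values `α ≠ χ(1)` of `χ`. The eigenvalues of `ρ g` are roots of unity, so their sum `χ(g)` equals
`dim V = χ(1)` only if they are all `1`, i.e. `ρ g = 1`, i.e. `g = 1` by faithfulness. Hence
`p ∘ χ` is supported at `1` and `⟨p ∘ χ, ψ⟩ = p(χ(1)) ψ(1) / |G| ≠ 0`, a contradiction.
The real part is positive rather than merely nonzero because `∑ g, χ(g)^l ψ(g)‾` is `|G|` times
the dimension of `Hom_G(W, V^{⊗l})`.
-/

open CategoryTheory MonoidalCategory Module

theorem LinearMap.trace_eq_sum_of_apply_basis_eq_smul {R M ι : Type*} [CommSemiring R]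
    [AddCommMonoid M] [Module R M] [Fintype ι] [DecidableEq ι] (b : Basis ι R M)
    {f : Module.End R M} (μ : ι → R) (hf : ∀ i, f (b i) = μ i • b i) :
    LinearMap.trace R M f = ∑ i, μ i := by
  simp [LinearMap.trace_eq_matrix_trace R b, Matrix.trace, LinearMap.toMatrix_apply, hf]

theorem Complex.forall_eq_one_of_sum_eq_card {ι : Type*} (s : Finset ι) {z : ι → ℂ}
    (hz : ∀ i ∈ s, ‖z i‖ ≤ 1) (hsum : ∑ i ∈ s, z i = s.card) : ∀ i ∈ s, z i = 1 := by
  have hre_le : ∀ i ∈ s, (z i).re ≤ 1 := fun i hi ↦ (re_le_norm _).trans (hz i hi)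
  have hre : ∀ i ∈ s, (z i).re = 1 := by
    refine (Finset.sum_eq_sum_iff_of_le hre_le).mp ?_
    simpa using congrArg re hsum
  intro i hi
  have him : (z i).im = 0 := by
    refine abs_re_eq_norm.mp (le_antisymm (abs_re_le_norm _) ?_)
    simpa [hre i hi] using hz i hi
  exact Complex.ext (hre i hi) him

namespace Module.End

section Field

variable {K M : Type*} [Field K] [AddCommGroup M] [Module K M]

theorem isSemisimple_of_isOfFinOrder [CharZero K] {A : End K M} (hA : IsOfFinOrder A) :
    A.IsSemisimple := by
  obtain ⟨n, hn, hAn⟩ := hA.exists_pow_eq_one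
  refine isSemisimple_of_squarefree_aeval_eq_zero
    (Polynomial.separable_X_pow_sub_C 1 (by exact_mod_cast hn.ne') one_ne_zero).squarefree ?_
  simp [hAn]

theorem IsSemisimple.exists_basis_eigenvectors [IsAlgClosed K] [FiniteDimensional K M]
    {A : End K M} (hA : A.IsSemisimple) :
    ∃ (b : Basis (Fin (finrank K M)) K M) (μ : Fin (finrank K M) → K),
      ∀ i, A.HasEigenvector (μ i) (b i) := by
  classical
  have hdecomp : DirectSum.IsInternal A.eigenspace :=
    DirectSum.isInternal_submodule_of_iSupIndep_of_iSup_eq_top A.eigenspaces_iSupIndep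
      hA.iSup_eigenspace_eq_top
  let v := hdecomp.collectedBasis fun μ ↦ finBasis K (A.eigenspace μ)
  let e := v.indexEquiv (finBasis K M)
  refine ⟨v.reindex e, fun i ↦ (e.symm i).1, fun i ↦ ?_⟩
  rw [Basis.reindex_apply]
  exact ⟨hdecomp.collectedBasis_mem _ _, v.ne_zero _⟩

end Field

section Complex

variable {M : Type*} [AddCommGroup M] [Module ℂ M] [FiniteDimensional ℂ M]

theorem exists_basis_eigenvectors_of_isOfFinOrder {A : End ℂ M} (hA : IsOfFinOrder A) :
    ∃ (b : Basis (Fin (finrank ℂ M)) ℂ M) (μ : Fin (finrank ℂ M) → ℂ),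
      (∀ i, A.HasEigenvector (μ i) (b i)) ∧ ∀ i, ‖μ i‖ = 1 := by
  obtain ⟨b, μ, hb⟩ := (isSemisimple_of_isOfFinOrder hA).exists_basis_eigenvectors
  obtain ⟨n, hn, hAn⟩ := hA.exists_pow_eq_one
  refine ⟨b, μ, hb, fun i ↦ Complex.norm_eq_one_of_pow_eq_one ?_ hn.ne'⟩
  refine smul_left_injective ℂ (hb i).2 ?_
  simpa [hAn] using ((hb i).pow_apply n).symm

theorem trace_eq_conj_trace_of_isOfFinOrder {A B : End ℂ M} (hA : IsOfFinOrder A)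
    (hBA : B * A = 1) : LinearMap.trace ℂ M B = starRingEnd ℂ (LinearMap.trace ℂ M A) := by
  obtain ⟨b, μ, hb, hμ⟩ := exists_basis_eigenvectors_of_isOfFinOrder hA
  have hA : ∀ i, A (b i) = μ i • b i := fun i ↦ (hb i).apply_eq_smul
  have hB : ∀ i, B (b i) = (μ i)⁻¹ • b i := fun i ↦ by
    have hμ0 : μ i ≠ 0 := norm_ne_zero_iff.mp (by simp [hμ i])
    calc B (b i) = (μ i)⁻¹ • B (μ i • b i) := by rw [map_smul, inv_smul_smul₀ hμ0]
      _ = (μ i)⁻¹ • b i := by rw [← hA, ← mul_apply, hBA, one_apply]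
  rw [LinearMap.trace_eq_sum_of_apply_basis_eq_smul b μ hA,
    LinearMap.trace_eq_sum_of_apply_basis_eq_smul b _ hB, map_sum]
  exact Finset.sum_congr rfl fun i _ ↦ Complex.inv_eq_conj (hμ i)

theorem eq_one_of_isOfFinOrder_of_trace_eq_finrank {A : End ℂ M} (hA : IsOfFinOrder A)
    (htr : LinearMap.trace ℂ M A = finrank ℂ M) : A = 1 := by
  obtain ⟨b, μ, hb, hμ⟩ := exists_basis_eigenvectors_of_isOfFinOrder hA
  have hA : ∀ i, A (b i) = μ i • b i := fun i ↦ (hb i).apply_eq_smul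
  have hμ1 : ∀ i, μ i = 1 := fun i ↦
    Complex.forall_eq_one_of_sum_eq_card Finset.univ (fun i _ ↦ (hμ i).le)
      (by simpa [← LinearMap.trace_eq_sum_of_apply_basis_eq_smul b μ hA]) i (Finset.mem_univ i)
  exact b.ext fun i ↦ by simp [hA, hμ1]

end Complex

end Module.End

open Polynomial in
theorem exists_sum_pow_mul_ne_zero {ι R : Type*} [Fintype ι] [CommRing R] [IsDomain R]
    [DecidableEq R] (f c : ι → R) {i₀ : ι} (hf : ∀ i, f i = f i₀ → i = i₀) (hc : c i₀ ≠ 0) :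
    ∃ l < (Finset.univ.image f).card, ∑ i, f i ^ l * c i ≠ 0 := by
  by_contra! hsum
  set S := (Finset.univ.image f).erase (f i₀)
  set p : R[X] := ∏ α ∈ S, (X - C α)
  have hS : S.card < (Finset.univ.image f).card :=
    Finset.card_erase_lt_of_mem (Finset.mem_image_of_mem f (Finset.mem_univ i₀))
  have hdeg : p.natDegree < (Finset.univ.image f).card := by
    rwa [natDegree_prod_of_monic _ _ fun α _ ↦ monic_X_sub_C α, Finset.sum_congr rfl
      fun α _ ↦ natDegree_X_sub_C α, Finset.sum_const, smul_eq_mul, mul_one]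
  have hroot : ∀ i ≠ i₀, p.eval (f i) = 0 := fun i hi ↦ by
    rw [eval_prod]
    refine Finset.prod_eq_zero (Finset.mem_erase.mpr ⟨fun h ↦ hi (hf i h), by simp⟩) (by simp)
  have hp : p.eval (f i₀) ≠ 0 := by
    rw [eval_prod, Finset.prod_ne_zero_iff]
    intro α hα
    simpa [sub_eq_zero] using (Finset.ne_of_mem_erase hα).symm
  have hvanish : ∑ i, p.eval (f i) * c i = 0 := by
    simp_rw [eval_eq_sum_range' hdeg, Finset.sum_mul, mul_assoc]
    rw [Finset.sum_comm]
    exact Finset.sum_eq_zero fun l hl ↦ by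
      rw [← Finset.mul_sum, hsum l (Finset.mem_range.mp hl), mul_zero]
  rw [Finset.sum_eq_single i₀ (fun i _ hi ↦ by rw [hroot i hi, zero_mul]) (by simp)] at hvanish
  exact mul_ne_zero hp hc hvanish

namespace FDRep

theorem exists_char_eq_pow {k G : Type*} [Field k] [Monoid G] (V : FDRep k G) (l : ℕ) :
    ∃ X : FDRep k G, X.character = V.character ^ l := by
  induction l with
  | zero => exact ⟨FDRep.of (Representation.trivial k G k), by ext; simp [character]⟩
  | succ l ih =>
    obtain ⟨X, hX⟩ := ih
    exact ⟨X ⊗ V, by rw [char_tensor, hX, pow_succ]⟩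

theorem finrank_ne_zero_of_simple {k G : Type*} [Field k] [Monoid G] (W : FDRep k G) [Simple W] :
    finrank k W ≠ 0 := fun h ↦ by
  have : Subsingleton W := finrank_zero_iff.mp h
  exact id_nonzero W (by ext; exact Subsingleton.elim _ _)

variable {G : Type*} [Group G]

theorem char_inv_eq_conj [Finite G] (V : FDRep ℂ G) (g : G) :
    V.character g⁻¹ = starRingEnd ℂ (V.character g) :=
  Module.End.trace_eq_conj_trace_of_isOfFinOrder (V.ρ.isOfFinOrder (isOfFinOrder_of_finite g))
    (by rw [← map_mul, inv_mul_cancel, map_one])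

theorem ρ_eq_one_of_char_eq_finrank [Finite G] (V : FDRep ℂ G) {g : G}
    (h : V.character g = finrank ℂ V) : V.ρ g = 1 :=
  Module.End.eq_one_of_isOfFinOrder_of_trace_eq_finrank
    (V.ρ.isOfFinOrder (isOfFinOrder_of_finite g)) h

theorem sum_char_mul_conj_char [Fintype G] (V W : FDRep ℂ G) :
    ∑ g, V.character g * starRingEnd ℂ (W.character g) = Nat.card G * finrank ℂ (W ⟶ V) := by
  have hG : (Nat.card G : ℂ) ≠ 0 := Nat.cast_ne_zero.mpr Nat.card_pos.ne'
  have : Invertible (Nat.card G : ℂ) := invertibleOfNonzero hG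
  rw [← scalar_product_char_eq_finrank_equivariant, mul_inv_cancel_left₀ hG]
  simp_rw [char_inv_eq_conj]

end FDRep

theorem stmt_12_general (G : Type) [Group G] [Fintype G]
    (V : FDRep ℂ G) (hfaithful : ∀ g : G, V.ρ g = 1 → g = 1)
    (t : ℕ) (ht : t = (Finset.univ.image V.character).card) :
    ∀ W : FDRep ℂ G, Simple W → ∃ l : ℕ, l ≤ t - 1 ∧
      0 < (∑ g : G, (V.character g) ^ l * (starRingEnd ℂ) (W.character g)).re := by
  intro W hW
  have hχ : ∀ g, V.character g = V.character 1 → g = 1 := fun g hg ↦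
    hfaithful g (V.ρ_eq_one_of_char_eq_finrank (by rw [hg, FDRep.char_one]))
  have hψ : starRingEnd ℂ (W.character 1) ≠ 0 := by
    simpa using W.finrank_ne_zero_of_simple
  obtain ⟨l, hlt, hne⟩ := exists_sum_pow_mul_ne_zero V.character
    (fun g ↦ starRingEnd ℂ (W.character g)) hχ hψ
  obtain ⟨X, hX⟩ := V.exists_char_eq_pow l
  have hsum : ∑ g, V.character g ^ l * starRingEnd ℂ (W.character g)
      = ((Nat.card G * finrank ℂ (W ⟶ X) : ℕ) : ℂ) := by
    push_cast
    simpa only [hX, Pi.pow_apply] using X.sum_char_mul_conj_char W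
  refine ⟨l, by omega, ?_⟩
  rw [hsum] at hne ⊢
  rw [Complex.natCast_re, Nat.cast_pos]
  exact Nat.pos_of_ne_zero (by exact_mod_cast hne)

theorem stmt_12 (G : Type) [Group G] [Fintype G] [DecidableEq G]
    (V : FDRep ℂ G) (hfaithful : ∀ g : G, V.ρ g = 1 → g = 1)
    (t : ℕ) (ht : t = (Finset.univ.image V.character).card) :
    ∀ W : FDRep ℂ G, Simple W → ∃ l : ℕ, l ≤ t - 1 ∧
      0 < (∑ g : G, (V.character g) ^ l * (starRingEnd ℂ) (W.character g)).re :=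
  stmt_12_general G V hfaithful t ht
end
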